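/- arXiv:1003.4707 — 3 statements merged into one kernel-verified Lean document; each statement's English description precedes it below -/
import Mathlib

section
/- Let κ be an inaccessible cardinal. Then κ is a Vopěnka cardinal if and only if for every set B ⊆ V_κ of cardinality κ all of whose elements are ordinal L_std-structures, there exist distinct M, N ∈ B and an L_std-elementary embedding j : M → N. -/
open FirstOrder

universe u

/-- The relations of the standard language `L_std`: one binary relation symbol `ε` and one
unary relation symbol `R`. -/
inductive LStdRel : ℕ → Type
  | eps : LStdRel 2
  | r : LStdRel 1

/-- The standard first-order language `L_std`, with one binary relation symbol `ε` and one
unary relation symbol `R`. -/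
def LStd : FirstOrder.Language := ⟨fun _ => Empty, LStdRel⟩

/-- The `L_std`-structure coded by the ZFC sets `M` (the domain), `E` (a binary relation on `M`,
coded as a set of Kuratowski pairs) and `R` (a unary relation, coded as a subset of `M`). -/
def codedStructure (M E R : ZFSet.{u}) : LStd.Structure ↥M.toSet where
  funMap := fun f _ => f.elim
  RelMap
    | .eps, x => ZFSet.pair (x 0).1 (x 1).1 ∈ E
    | .r, x => (x 0).1 ∈ R

/-- The ZFC set `S` codes an `L_std`-structure: it is a triple `⟨M, E, R⟩` with `E` a binary
relation on `M` and `R` a unary relation on `M`. -/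
def IsLStdCode (S : ZFSet.{u}) : Prop :=
  ∃ M E R : ZFSet.{u}, S = M.pair (E.pair R) ∧
    (∀ p ∈ E, ∃ a ∈ M, ∃ b ∈ M, p = a.pair b) ∧ R ⊆ M

/-- The ZFC set `S` codes an ordinal `L_std`-structure: an `L_std`-structure whose domain is a
(von Neumann) ordinal. -/
def IsOrdinalLStdCode (S : ZFSet.{u}) : Prop :=
  ∃ M E R : ZFSet.{u}, S = M.pair (E.pair R) ∧ M.IsOrdinal ∧
    (∀ p ∈ E, ∃ a ∈ M, ∃ b ∈ M, p = a.pair b) ∧ R ⊆ M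

/-- There is an `L_std`-elementary embedding from the structure coded by `S` into the structure
coded by `T`. -/
def ElemEmbeddable (S T : ZFSet.{u}) : Prop :=
  ∃ M E R N E' R' : ZFSet.{u}, S = M.pair (E.pair R) ∧ T = N.pair (E'.pair R') ∧
    letI := codedStructure M E R
    letI := codedStructure N E' R'
    Nonempty (↥M.toSet ↪ₑ[LStd] ↥N.toSet)

/-- `VP A`: there are distinct members `M ≠ N` of the set `A` such that there is an
`L_std`-elementary embedding from `M` into `N`. -/
def VP (A : ZFSet.{u}) : Prop :=
  ∃ M ∈ A, ∃ N ∈ A, M ≠ N ∧ ElemEmbeddable M N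

/-- `κ` is a Vopěnka cardinal: `κ` is inaccessible, and for every set `A ⊆ V_κ` of cardinality
`κ` all of whose elements are `L_std`-structures, `VP A` holds. -/
def IsVopenka (κ : Cardinal.{u}) : Prop :=
  κ.IsInaccessible ∧
    ∀ A : ZFSet.{u}, (∀ x ∈ A, x.rank < κ.ord) →
      Cardinal.mk ↥A.toSet = Cardinal.lift.{u + 1} κ →
      (∀ x ∈ A, IsLStdCode x) → VP A

/-!
A coded structure of rank below `κ` has fewer than `κ` elements, since `κ` is a strong limit, so
transporting it along a bijection of its domain with the ordinal `|M| < κ` gives an isomorphic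
ordinal structure, again of rank below `κ`. Replace every member of a set `A` of `κ` structures by
such a copy. If two members get the same copy, they are isomorphic; otherwise the copies form a set
of `κ` ordinal structures, the hypothesis yields an elementary embedding between two of them, and
composing with the isomorphisms gives one between the corresponding members of `A`.
-/

open ZFSet Cardinal Ordinal

namespace ZFSet

theorem rank_lt_rank_pair_left (x y : ZFSet.{u}) : x.rank < (x.pair y).rank :=
  (rank_lt_of_mem (mem_singleton.2 rfl)).trans (rank_lt_of_mem (mem_pair.2 (Or.inl rfl)))

theorem rank_pair_lt {x y : ZFSet.{u}} {o : Ordinal.{u}} (ho : Order.IsSuccLimit o)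
    (hx : x.rank < o) (hy : y.rank < o) : (x.pair y).rank < o := by
  rw [pair, rank_pair, rank_singleton, rank_pair]
  exact max_lt (ho.succ_lt (ho.succ_lt hx)) (ho.succ_lt (max_lt (ho.succ_lt hx) (ho.succ_lt hy)))

theorem card_lt_of_rank_lt {κ : Cardinal.{u}} (hκ : κ.IsInaccessible) {x : ZFSet.{u}}
    (hx : x.rank < κ.ord) : x.card < κ :=
  calc x.card ≤ (V_ x.rank).card := card_mono (subset_vonNeumann_self x)
    _ = preBeth x.rank := card_vonNeumann _
    _ < preBeth κ.ord := preBeth_lt_preBeth.2 hx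
    _ = κ := hκ.preBeth_ord

end ZFSet

section Transport

variable {M N : ZFSet.{u}} (e : ↥M.toSet ≃ ↥N.toSet) (E R : ZFSet.{u})

noncomputable def transportRel : ZFSet.{u} :=
  pairSep (fun a b => ∃ (ha : a ∈ N) (hb : b ∈ N),
    pair (e.symm ⟨a, ha⟩).1 (e.symm ⟨b, hb⟩).1 ∈ E) N N

noncomputable def transportPred : ZFSet.{u} :=
  N.sep fun a => ∃ ha : a ∈ N, (e.symm ⟨a, ha⟩).1 ∈ R

noncomputable def transportCode : ZFSet.{u} :=
  N.pair ((transportRel e E).pair (transportPred e R))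

theorem pair_mem_transportRel_iff (a b : ↥N.toSet) :
    pair a.1 b.1 ∈ transportRel e E ↔ pair (e.symm a).1 (e.symm b).1 ∈ E := by
  simp only [transportRel, mem_pairSep]
  constructor
  · rintro ⟨a', -, b', -, hab, _, _, hE⟩
    obtain ⟨rfl, rfl⟩ := pair_injective hab
    exact hE
  · intro hE
    exact ⟨a, a.2, b, b.2, rfl, a.2, b.2, hE⟩

theorem mem_transportPred_iff (a : ↥N.toSet) :
    a.1 ∈ transportPred e R ↔ (e.symm a).1 ∈ R := by
  simp only [transportPred, mem_sep]
  exact ⟨fun ⟨_, _, h⟩ => h, fun h => ⟨a.2, a.2, h⟩⟩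

noncomputable def transportEquiv :
    letI := codedStructure M E R
    letI := codedStructure N (transportRel e E) (transportPred e R)
    ↥M.toSet ≃[LStd] ↥N.toSet :=
  letI := codedStructure M E R
  letI := codedStructure N (transportRel e E) (transportPred e R)
  { toEquiv := e
    map_fun' := fun f _ => f.elim
    map_rel' := by
      intro n rel x
      cases rel with
      | eps =>
        change pair (e (x 0)).1 (e (x 1)).1 ∈ transportRel e E ↔ pair (x 0).1 (x 1).1 ∈ E
        rw [pair_mem_transportRel_iff, e.symm_apply_apply, e.symm_apply_apply]
      | r =>
        change (e (x 0)).1 ∈ transportPred e R ↔ (x 0).1 ∈ R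
        rw [mem_transportPred_iff, e.symm_apply_apply] }

theorem elemEmbeddable_transportCode :
    ElemEmbeddable (M.pair (E.pair R)) (transportCode e E R) :=
  letI := codedStructure M E R
  letI := codedStructure N (transportRel e E) (transportPred e R)
  ⟨_, _, _, _, _, _, rfl, rfl, ⟨(transportEquiv e E R).toElementaryEmbedding⟩⟩

theorem transportCode_elemEmbeddable :
    ElemEmbeddable (transportCode e E R) (M.pair (E.pair R)) :=
  letI := codedStructure M E R
  letI := codedStructure N (transportRel e E) (transportPred e R)
  ⟨_, _, _, _, _, _, rfl, rfl, ⟨(transportEquiv e E R).symm.toElementaryEmbedding⟩⟩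

theorem isOrdinalLStdCode_transportCode (hN : N.IsOrdinal) :
    IsOrdinalLStdCode (transportCode e E R) := by
  refine ⟨N, transportRel e E, transportPred e R, rfl, hN, fun p hp => ?_, fun a ha => ?_⟩
  · obtain ⟨a, ha, b, hb, rfl, -⟩ := mem_pairSep.1 hp
    exact ⟨a, ha, b, hb, rfl⟩
  · exact (mem_sep.1 ha).1

theorem rank_transportCode_lt {o : Ordinal.{u}} (ho : Order.IsSuccLimit o) (hN : N.rank < o) :
    (transportCode e E R).rank < o := by
  have hE : (transportRel e E).rank < o :=
    calc (transportRel e E).rank ≤ (powerset (powerset (N ∪ N))).rank :=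
          rank_mono (show pairSep _ N N ⊆ _ from sep_subset)
      _ = Order.succ (Order.succ N.rank) := by
        rw [rank_powerset, rank_powerset, rank_union, max_self]
      _ < o := ho.succ_lt (ho.succ_lt hN)
  have hR : (transportPred e R).rank < o := (rank_mono sep_subset).trans_lt hN
  exact rank_pair_lt ho hN (rank_pair_lt ho hE hR)

end Transport

theorem IsOrdinalLStdCode.isLStdCode {S : ZFSet.{u}} (hS : IsOrdinalLStdCode S) :
    IsLStdCode S :=
  let ⟨M, E, R, hS, _, hE, hR⟩ := hS
  ⟨M, E, R, hS, hE, hR⟩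

theorem ElemEmbeddable.trans {S T U : ZFSet.{u}} (hST : ElemEmbeddable S T)
    (hTU : ElemEmbeddable T U) : ElemEmbeddable S U := by
  obtain ⟨M, E, R, N, E', R', rfl, rfl, ⟨f⟩⟩ := hST
  obtain ⟨N₂, E₂, R₂, P, E₃, R₃, hT, rfl, ⟨g⟩⟩ := hTU
  obtain ⟨rfl, hER⟩ := pair_injective hT
  obtain ⟨rfl, rfl⟩ := pair_injective hER
  let := codedStructure M E R
  let := codedStructure N E' R'
  let := codedStructure P E₃ R₃
  exact ⟨M, E, R, P, E₃, R₃, rfl, rfl, ⟨g.comp f⟩⟩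

theorem VP.of_forall_exists_biembeddable {A : ZFSet.{u}} {P : ZFSet.{u} → Prop}
    (hA : ∀ S ∈ A, ∃ T, P T ∧ ElemEmbeddable S T ∧ ElemEmbeddable T S)
    (hP : ∀ B : ZFSet.{u}, (∀ T ∈ B, P T) → #↥B.toSet = #↥A.toSet → VP B) : VP A := by
  have : ∀ S, ∃ T, S ∈ A → P T ∧ ElemEmbeddable S T ∧ ElemEmbeddable T S := by
    intro S
    by_cases hS : S ∈ A
    · exact (hA S hS).imp fun _ hT _ => hT
    · exact ⟨S, fun h => absurd h hS⟩
  choose f hf using this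
  let : Definable₁ f := Classical.allZFSetDefinable _
  by_cases hinj : ∀ S ∈ A, ∀ T ∈ A, f S = f T → S = T
  · have hcard : #↥(image f A).toSet = #↥A.toSet :=
      (congrArg (fun s : Set ZFSet.{u} => #↥s) (coe_image f A)).trans
        (mk_image_eq_of_injOn f _ hinj)
    obtain ⟨_, hS', _, hT', hne, hST⟩ :=
      hP (image f A) (fun _ h => let ⟨S, hS, hSf⟩ := mem_image.1 h; hSf ▸ (hf S hS).1) hcard
    obtain ⟨S, hS, rfl⟩ := mem_image.1 hS'
    obtain ⟨T, hT, rfl⟩ := mem_image.1 hT'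
    exact ⟨S, hS, T, hT, fun h => hne (h ▸ rfl), ((hf S hS).2.1.trans hST).trans (hf T hT).2.2⟩
  · push Not at hinj
    obtain ⟨S, hS, T, hT, hfST, hne⟩ := hinj
    exact ⟨S, hS, T, hT, hne, (hf S hS).2.1.trans (hfST ▸ (hf T hT).2.2)⟩

theorem IsLStdCode.exists_ordinal_biembeddable {κ : Cardinal.{u}} (hκ : κ.IsInaccessible)
    {S : ZFSet.{u}} (hS : IsLStdCode S) (hrank : S.rank < κ.ord) :
    ∃ T, (T.rank < κ.ord ∧ IsOrdinalLStdCode T) ∧ ElemEmbeddable S T ∧ ElemEmbeddable T S := by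
  obtain ⟨M, E, R, rfl, -, -⟩ := hS
  set N := M.card.ord.toZFSet
  have hMN : #↥M.toSet = #↥N.toSet :=
    calc #↥M.toSet = lift M.card := cardinalMk_coe_sort
      _ = lift N.card := by rw [card_toZFSet, card_ord]
      _ = #↥N.toSet := cardinalMk_coe_sort.symm
  obtain ⟨e⟩ := Cardinal.eq.1 hMN
  have hN : N.rank < κ.ord := by
    rw [rank_toZFSet, ord_lt_ord]
    exact card_lt_of_rank_lt hκ ((rank_lt_rank_pair_left _ _).trans hrank)
  exact ⟨transportCode e E R,
    ⟨rank_transportCode_lt e E R (isSuccLimit_ord hκ.aleph0_lt.le) hN,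
      isOrdinalLStdCode_transportCode e E R (isOrdinal_toZFSet _)⟩,
    elemEmbeddable_transportCode e E R, transportCode_elemEmbeddable e E R⟩

/-- Lemma 5 (`VPoLs`): an inaccessible cardinal `κ` is Vopěnka if and only if for every set
`B ⊆ V_κ` of cardinality `κ` all of whose elements are ordinal `L_std`-structures, there exist
distinct `M, N ∈ B` and an `L_std`-elementary embedding `j : M → N`. -/
theorem isVopenka_iff_ordinal_structures (κ : Cardinal.{u}) (hκ : κ.IsInaccessible) :
    IsVopenka κ ↔
      ∀ B : ZFSet.{u}, (∀ x ∈ B, x.rank < κ.ord) →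
        Cardinal.mk ↥B.toSet = Cardinal.lift.{u + 1} κ →
        (∀ x ∈ B, IsOrdinalLStdCode x) →
        ∃ M ∈ B, ∃ N ∈ B, M ≠ N ∧ ElemEmbeddable M N := by
  refine ⟨fun hV B hrank hcard hB => hV.2 B hrank hcard fun x hx => (hB x hx).isLStdCode,
    fun hVP => ⟨hκ, fun A hrank hcard hA => ?_⟩⟩
  refine VP.of_forall_exists_biembeddable
    (fun S hS => (hA S hS).exists_ordinal_biembeddable hκ (hrank S hS)) fun B hB hBcard => ?_
  exact hVP B (fun T hT => (hB T hT).1) (hBcard.trans hcard) fun T hT => (hB T hT).2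
end

section
/- Suppose that for every proper class A there is an A-extendible cardinal. Then for every proper class B of ordinal L_std-structures there exist M, N ∈ B whose domains have different cardinalities and an L_std-elementary embedding j : M → N. -/
open FirstOrder

universe u

/-- A class of sets (i.e. a predicate on ZFC sets) is a proper class if it is not coextensive
with any set. -/
def IsProperClass (A : Set ZFSet.{u}) : Prop :=
  ¬∃ a : ZFSet.{u}, a.toSet = A

/-- The structure `⟨V_η, ∈, A ∩ V_η⟩`: the domain consists of the sets of rank `< η`, with `ε`
interpreted as membership and `R` interpreted as membership in the class `A`. -/
def VStructure (η : Ordinal.{u}) (A : Set ZFSet.{u}) :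
    LStd.Structure {x : ZFSet.{u} // x.rank < η} where
  funMap := fun f _ => f.elim
  RelMap
    | .eps, x => (x 0).1 ∈ (x 1).1
    | .r, x => (x 0).1 ∈ A

/-- The ZFC set `α` is a (von Neumann) cardinal: it is an ordinal and every one of its elements
has strictly smaller cardinality. -/
def ZFIsCardinal (α : ZFSet.{u}) : Prop :=
  α.IsOrdinal ∧ ∀ β ∈ α, Cardinal.mk ↥β.toSet < Cardinal.mk ↥α.toSet

/-- For von Neumann ordinals `α`, `η`, `ζ` and a class `A`: there is an elementary embedding
`j : ⟨V_η, ∈, A ∩ V_η⟩ → ⟨V_ζ, ∈, A ∩ V_ζ⟩` with critical point `α` (i.e. `j` fixes every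
ordinal `β < α` and moves `α`) such that `j α > η`. -/
def ExtWitness (A : Set ZFSet.{u}) (α η ζ : ZFSet.{u}) : Prop :=
  letI := VStructure η.rank A
  letI := VStructure ζ.rank A
  ∃ j : {x : ZFSet.{u} // x.rank < η.rank} ↪ₑ[LStd] {x : ZFSet.{u} // x.rank < ζ.rank},
    (∀ (β : ZFSet.{u}) (hβ : β.rank < η.rank), β ∈ α → (j ⟨β, hβ⟩).1 = β) ∧
    ∀ hα : α.rank < η.rank, (j ⟨α, hα⟩).1 ≠ α ∧ η ∈ (j ⟨α, hα⟩).1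

/-- `α` is `η`-extendible for the class `A`: there are an ordinal `ζ` and an elementary
embedding `j : ⟨V_η, ∈, A ∩ V_η⟩ → ⟨V_ζ, ∈, A ∩ V_ζ⟩` with critical point `α` and `j α > η`. -/
def EtaExtendibleFor (A : Set ZFSet.{u}) (α η : ZFSet.{u}) : Prop :=
  ∃ ζ : ZFSet.{u}, ζ.IsOrdinal ∧ ExtWitness A α η ζ

/-- `α` is an `A`-extendible cardinal: `α` is a cardinal that is `η`-extendible for `A`
for every ordinal `η > α`. -/
def AExtendible (A : Set ZFSet.{u}) (α : ZFSet.{u}) : Prop :=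
  ZFIsCardinal α ∧ ∀ η : ZFSet.{u}, η.IsOrdinal → α ∈ η → EtaExtendibleFor A α η

/-- There is an `L_std`-elementary embedding from the structure coded by `S` into the structure
coded by `T`, where the domains of the two structures have different cardinalities. -/
def ElemEmbeddableDiffCard (S T : ZFSet.{u}) : Prop :=
  ∃ M E R N E' R' : ZFSet.{u}, S = M.pair (E.pair R) ∧ T = N.pair (E'.pair R') ∧
    Cardinal.mk ↥M.toSet ≠ Cardinal.mk ↥N.toSet ∧
    letI := codedStructure M E R
    letI := codedStructure N E' R'
    Nonempty (↥M.toSet ↪ₑ[LStd] ↥N.toSet)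

/-!
Let `κ` be `B`-extendible. Since `B` is proper it contains a code `S = ⟨δ, E, R⟩` with `κ < δ`;
take an ordinal `η` with `S ∈ V_η` and `|δ| < |η|`, and an embedding `j : V_η → V_ζ` with
critical point `κ` and `η < j κ`. Then `j S = ⟨j δ, j E, j R⟩ ∈ B`, and `η < j κ < j δ`, so
`|δ| < |j δ|`. Satisfaction in the structure coded by `⟨δ, E, R⟩` is definable in `V_η` from the
parameters `δ, E, R`, so elementarity of `j` makes its restriction to `δ` an
elementary embedding of that structure into the one coded by `j S`.
-/

open FirstOrder.Language

namespace ZFSet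

theorem rank_pair_eq (a b : ZFSet.{u}) : (a.pair b).rank = max a.rank b.rank + 2 := by
  simp [pair, rank_singleton, Order.succ_eq_add_one, ← max_add_add_right, add_assoc,
    one_add_one_eq_two]

theorem rank_lt_rank_pair_left_s7 (a b : ZFSet.{u}) : a.rank < (a.pair b).rank := by
  rw [rank_pair_eq]
  exact (le_max_left _ _).trans_lt (lt_add_of_pos_right _ two_pos)

theorem rank_lt_rank_pair_right (a b : ZFSet.{u}) : b.rank < (a.pair b).rank := by
  rw [rank_pair_eq]
  exact (le_max_right _ _).trans_lt (lt_add_of_pos_right _ two_pos)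

theorem rank_prod_le (x y : ZFSet.{u}) : (x.prod y).rank ≤ max x.rank y.rank + 2 := by
  calc (x.prod y).rank ≤ (powerset (powerset (x ∪ y))).rank :=
        rank_mono (by unfold prod pairSep; exact sep_subset)
    _ = _ := by simp [rank_union, Order.succ_eq_add_one, add_assoc, one_add_one_eq_two]

theorem rank_pair_pair_le {δ E R : ZFSet.{u}} (hE : E ⊆ δ.prod δ) (hR : R ⊆ δ) :
    (δ.pair (E.pair R)).rank ≤ δ.rank + 6 := by
  have hE' : E.rank ≤ δ.rank + 2 := by simpa using (rank_mono hE).trans (rank_prod_le δ δ)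
  have hR' : R.rank ≤ δ.rank + 2 := (rank_mono hR).trans le_self_add
  calc (δ.pair (E.pair R)).rank = max δ.rank (max E.rank R.rank + 2) + 2 := by
        rw [rank_pair_eq, rank_pair_eq]
    _ ≤ max (δ.rank + 4) (δ.rank + 2 + 2) + 2 := by
        gcongr
        · exact le_self_add
        · exact max_le hE' hR'
    _ = δ.rank + 6 := by norm_num [add_assoc]

theorem eq_pair_iff {x y z : ZFSet.{u}} :
    z = x.pair y ↔ (∀ w ∈ z, w = {x} ∨ w = {x, y}) ∧ {x} ∈ z ∧ {x, y} ∈ z := by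
  refine ⟨fun h => by simp [h, pair], fun ⟨h, hx, hxy⟩ => ZFSet.ext fun w => ?_⟩
  simp only [pair, mem_insert_iff, mem_singleton]
  exact ⟨h w, by rintro (rfl | rfl) <;> assumption⟩

theorem IsOrdinal.card_eq {x : ZFSet.{u}} (hx : x.IsOrdinal) : x.card = x.rank.card := by
  rw [← Ordinal.card_toZFSet, hx.toZFSet_rank_eq]

theorem exists_isOrdinal_lt_rank_card_lt (o : Ordinal.{u}) :
    ∃ η : ZFSet.{u}, η.IsOrdinal ∧ o < η.rank ∧ o.card < η.card :=
  ⟨(Order.succ o.card).ord.toZFSet, isOrdinal_toZFSet _,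
    by simp [Cardinal.lt_ord], by simp⟩

end ZFSet

theorem IsProperClass.exists_le_rank {B : Set ZFSet.{u}} (hB : IsProperClass B)
    (o : Ordinal.{u}) : ∃ S ∈ B, o ≤ S.rank := by
  by_contra! hsmall
  refine hB ⟨(ZFSet.vonNeumann o).sep (· ∈ B), Set.ext fun x => ?_⟩
  show x ∈ (ZFSet.vonNeumann o).sep _ ↔ _
  simpa [ZFSet.mem_vonNeumann] using hsmall x

theorem IsProperClass.exists_code_dom_gt {B : Set ZFSet.{u}} (hB : IsProperClass B)
    (hcode : ∀ x ∈ B, IsOrdinalLStdCode x) {κ : ZFSet.{u}} (hκ : κ.IsOrdinal) :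
    ∃ δ E R : ZFSet.{u}, δ.pair (E.pair R) ∈ B ∧ δ.IsOrdinal ∧ κ ∈ δ := by
  obtain ⟨S, hSB, hS⟩ := hB.exists_le_rank (κ.rank + 7)
  obtain ⟨δ, E, R, rfl, hδ, hE, hR⟩ := hcode S hSB
  refine ⟨δ, E, R, hSB, hδ, (ZFSet.IsOrdinal.rank_lt_iff_mem hκ hδ).1 ?_⟩
  by_contra! hle
  have hSδ := hS.trans (ZFSet.rank_pair_pair_le (fun p hp => ZFSet.mem_prod.2 (hE p hp)) hR)
  have : κ.rank + 7 ≤ κ.rank + 6 := hSδ.trans (by gcongr)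
  norm_num at this

namespace FirstOrder.Language.BoundedFormula

variable {L : Language} {M : Type*} [L.Structure M] {α β : Type*} {n : ℕ}

/-- Substitution of terms for the free variables where, unlike in `subst`, the terms may mention
bound variables. -/
def instantiate (φ : L.Formula β) (ts : β → L.Term (α ⊕ Fin n)) : L.BoundedFormula α n :=
  (φ.subst ts).relabel id

@[simp]
theorem realize_instantiate (φ : L.Formula β) (ts : β → L.Term (α ⊕ Fin n)) (v : α → M)
    (xs : Fin n → M) :
    (φ.instantiate ts).Realize v xs ↔ φ.Realize fun i => (ts i).realize (Sum.elim v xs) := by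
  simp only [instantiate, realize_relabel, realize_subst, Formula.Realize]
  congr!

end FirstOrder.Language.BoundedFormula

namespace LStd

variable {α : Type*} {n : ℕ}

def memFormula (t₁ t₂ : LStd.Term (α ⊕ Fin n)) : LStd.BoundedFormula α n :=
  Relations.boundedFormula₂ (LStdRel.eps : LStd.Relations 2) t₁ t₂

local infixl:88 " ∈' " => memFormula

def freeVar {k : ℕ} (i : Fin k) : LStd.Term (Fin k ⊕ Fin n) := Term.var (Sum.inl i)

def isSingletonFormula : LStd.Formula (Fin 2) :=
  ∀' ((&0 ∈' freeVar 0) ⇔ (&0 =' freeVar 1))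

def isDoubletonFormula : LStd.Formula (Fin 3) :=
  ∀' ((&0 ∈' freeVar 0) ⇔ ((&0 =' freeVar 1) ⊔ (&0 =' freeVar 2)))

/-- `v₂ = ⟨v₀, v₁⟩`. The two elements of the pair are found by quantifiers bounded by `v₂`, so
that the formula is correct in every `V_ζ`, closed under pairing or not. -/
def isPairFormula : LStd.Formula (Fin 3) :=
  (∀' ((&0 ∈' freeVar 2) ⟹ (isSingletonFormula.instantiate ![&0, freeVar 0] ⊔
      isDoubletonFormula.instantiate ![&0, freeVar 0, freeVar 1]))) ⊓
    (∃' ((&0 ∈' freeVar 2) ⊓ isSingletonFormula.instantiate ![&0, freeVar 0])) ⊓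
    (∃' ((&0 ∈' freeVar 2) ⊓ isDoubletonFormula.instantiate ![&0, freeVar 0, freeVar 1]))

def pairMemFormula : LStd.Formula (Fin 3) :=
  ∃' ((&0 ∈' freeVar 2) ⊓ isPairFormula.instantiate ![freeVar 0, freeVar 1, &0])

def liftTerm (t : LStd.Term (α ⊕ Fin n)) : LStd.Term ((α ⊕ Fin 3) ⊕ Fin n) :=
  t.relabel (Sum.map Sum.inl id)

def param (i : Fin 3) : LStd.Term ((α ⊕ Fin 3) ⊕ Fin n) := Term.var (Sum.inl (Sum.inr i))

/-- The relativization of `φ` to the `L_std`-structure coded by `⟨M, E, R⟩`, as a formula about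
`⟨V_η, ∈⟩` in which the parameters `M`, `E`, `R` are the free variables `param 0, 1, 2`. -/
def relativize : ∀ {n : ℕ}, LStd.BoundedFormula α n → LStd.BoundedFormula (α ⊕ Fin 3) n
  | _, .falsum => .falsum
  | _, .equal t₁ t₂ => liftTerm t₁ =' liftTerm t₂
  | _, .rel .eps ts => pairMemFormula.instantiate ![liftTerm (ts 0), liftTerm (ts 1), param 1]
  | _, .rel .r ts => liftTerm (ts 0) ∈' param 2
  | _, .imp φ ψ => relativize φ ⟹ relativize ψ
  | n, .all φ => ∀' ((&(Fin.last n) ∈' param 0) ⟹ relativize φ)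

theorem realize_liftTerm {M N : Type*} [LStd.Structure M] [LStd.Structure N] (f : M → N)
    (t : LStd.Term (α ⊕ Fin n)) (v : α → M) (p : Fin 3 → N) (xs : Fin n → M) :
    (liftTerm t).realize (Sum.elim (Sum.elim (f ∘ v) p) (f ∘ xs)) =
      f (t.realize (Sum.elim v xs)) := by
  rcases t with (a | a) | ⟨⟨⟩⟩ <;> rfl

end LStd

/-- `V_η`, the domain of `VStructure η A`. -/
abbrev VSet (η : Ordinal.{u}) : Type (u + 1) := {x : ZFSet.{u} // x.rank < η}

namespace VSet

open LStd

variable {η : Ordinal.{u}} {A : Set ZFSet.{u}}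

theorem rank_lt_of_mem (x : VSet η) {w : ZFSet.{u}} (hw : w ∈ x.1) : w.rank < η :=
  (ZFSet.rank_lt_of_mem hw).trans x.2

def ofMem (m : VSet η) (x : m.1.toSet) : VSet η :=
  ⟨x.1, m.rank_lt_of_mem x.2⟩

theorem ofMem_injective (m : VSet η) : Function.Injective m.ofMem :=
  fun _ _ h => Subtype.ext (congrArg (fun d : VSet η => d.1) h)

theorem forall_mem_iff (m : VSet η) {P : VSet η → Prop} :
    (∀ d : VSet η, d.1 ∈ m.1 → P d) ↔ ∀ a : m.1.toSet, P (m.ofMem a) :=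
  ⟨fun h a => h _ a.2, fun h d hd => h ⟨d.1, hd⟩⟩

theorem val_eq_iff (x : VSet η) {s : ZFSet.{u}} (hs : ∀ w ∈ s, w.rank < η) :
    x.1 = s ↔ ∀ w : ZFSet.{u}, w.rank < η → (w ∈ x.1 ↔ w ∈ s) := by
  refine ⟨fun h w _ => by rw [h], fun h => ZFSet.ext fun w => ?_⟩
  constructor
  · exact fun hw => (h w (x.rank_lt_of_mem hw)).1 hw
  · exact fun hw => (h w (hs w hw)).2 hw

@[simp]
theorem realize_memFormula {β : Type*} {n : ℕ} (t₁ t₂ : LStd.Term (β ⊕ Fin n)) (v : β → VSet η)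
    (xs : Fin n → VSet η) :
    letI := VStructure η A
    (memFormula t₁ t₂).Realize v xs ↔
      (t₁.realize (Sum.elim v xs)).1 ∈ (t₂.realize (Sum.elim v xs)).1 :=
  Iff.rfl

@[simp]
theorem realize_isSingletonFormula (v : Fin 2 → VSet η) :
    letI := VStructure η A
    isSingletonFormula.Realize v ↔ (v 0).1 = {(v 1).1} := by
  rw [val_eq_iff _ (by simpa using (v 1).2)]
  simp [isSingletonFormula, Formula.Realize, freeVar, Fin.snoc, Subtype.ext_iff]

@[simp]
theorem realize_isDoubletonFormula (v : Fin 3 → VSet η) :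
    letI := VStructure η A
    isDoubletonFormula.Realize v ↔ (v 0).1 = {(v 1).1, (v 2).1} := by
  rw [val_eq_iff _ (by simpa using ⟨(v 1).2, (v 2).2⟩)]
  simp [isDoubletonFormula, Formula.Realize, freeVar, Fin.snoc, Subtype.ext_iff]

@[simp]
theorem realize_isPairFormula (v : Fin 3 → VSet η) :
    letI := VStructure η A
    isPairFormula.Realize v ↔ (v 2).1 = (v 0).1.pair (v 1).1 := by
  rw [ZFSet.eq_pair_iff]
  have h1 := (v 2).rank_lt_of_mem (w := {(v 0).1})
  have h2 := (v 2).rank_lt_of_mem (w := {(v 0).1, (v 1).1})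
  have h3 := fun w => (v 2).rank_lt_of_mem (w := w)
  simp only [isPairFormula, Formula.Realize]
  simp [freeVar, Fin.snoc] at h1 h2 ⊢
  grind

@[simp]
theorem realize_pairMemFormula (v : Fin 3 → VSet η) :
    letI := VStructure η A
    pairMemFormula.Realize v ↔ (v 0).1.pair (v 1).1 ∈ (v 2).1 := by
  have := fun w => (v 2).rank_lt_of_mem (w := w)
  simp only [pairMemFormula, Formula.Realize]
  simp [freeVar, Fin.snoc]
  grind

theorem realize_relativize {α : Type*} (m e r : VSet η) {n : ℕ} (φ : LStd.BoundedFormula α n)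
    (v : α → m.1.toSet) (xs : Fin n → m.1.toSet) :
    letI := codedStructure m.1 e.1 r.1
    letI := VStructure η A
    (relativize φ).Realize (Sum.elim (m.ofMem ∘ v) ![m, e, r]) (m.ofMem ∘ xs) ↔
      φ.Realize v xs := by
  let _ := codedStructure m.1 e.1 r.1
  let _ := VStructure η A
  induction φ with
  | falsum => rfl
  | equal t₁ t₂ =>
    simp only [relativize, BoundedFormula.realize_bdEqual, realize_liftTerm,
      m.ofMem_injective.eq_iff]
    rfl
  | rel R ts =>
    cases R with
    | eps =>
      simp only [relativize, BoundedFormula.realize_instantiate, realize_pairMemFormula]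
      simp [realize_liftTerm, param]
      rfl
    | r =>
      simp [relativize, realize_liftTerm, param]
      rfl
  | imp φ ψ ihφ ihψ => simp only [relativize, BoundedFormula.realize_imp, ihφ, ihψ]
  | all φ ih =>
    simp only [relativize, BoundedFormula.realize_all, BoundedFormula.realize_imp,
      realize_memFormula, param, Function.comp_apply, Term.realize_var, Sum.elim_inl,
      Sum.elim_inr, Fin.snoc_last, Matrix.cons_val_zero]
    rw [m.forall_mem_iff]
    refine forall_congr' fun a => ?_
    simpa only [Fin.comp_snoc] using ih (Fin.snoc xs a)

end VSet

/-- An elementary embedding `⟨V_η, ∈, A ∩ V_η⟩ → ⟨V_ζ, ∈, A ∩ V_ζ⟩`. -/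
abbrev VEmbedding (A : Set ZFSet.{u}) (η ζ : Ordinal.{u}) : Type (u + 1) :=
  @ElementaryEmbedding LStd (VSet η) (VSet ζ) (VStructure η A) (VStructure ζ A)

namespace VEmbedding

variable {A : Set ZFSet.{u}} {η ζ : Ordinal.{u}} (j : VEmbedding A η ζ)

theorem mem_iff (x y : VSet η) : (j x).1 ∈ (j y).1 ↔ x.1 ∈ y.1 :=
  let _ := VStructure η A
  let _ := VStructure ζ A
  j.map_rel LStdRel.eps ![x, y]

theorem mem_class_iff (x : VSet η) : (j x).1 ∈ A ↔ x.1 ∈ A :=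
  let _ := VStructure η A
  let _ := VStructure ζ A
  j.map_rel LStdRel.r ![x]

theorem map_pair {x y z : VSet η} (h : z.1 = x.1.pair y.1) :
    (j z).1 = (j x).1.pair (j y).1 := by
  let _ := VStructure η A
  let _ := VStructure ζ A
  have := j.map_formula LStd.isPairFormula ![x, y, z]
  simp only [VSet.realize_isPairFormula] at this
  simpa using this.2 h

def restrict (m : VSet η) (a : m.1.toSet) : (j m).1.toSet :=
  ⟨(j (m.ofMem a)).1, (j.mem_iff _ _).2 a.2⟩

theorem exists_elementaryEmbedding_codedStructure (m e r : VSet η) :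
    letI := codedStructure m.1 e.1 r.1
    letI := codedStructure (j m).1 (j e).1 (j r).1
    Nonempty (m.1.toSet ↪ₑ[LStd] (j m).1.toSet) := by
  let _ := VStructure η A
  let _ := VStructure ζ A
  let _ := codedStructure m.1 e.1 r.1
  let _ := codedStructure (j m).1 (j e).1 (j r).1
  refine ⟨⟨j.restrict m, fun n φ xs => ?_⟩⟩
  have hparams : j ∘ Sum.elim (m.ofMem ∘ xs) ![m, e, r] =
      Sum.elim ((j m).ofMem ∘ j.restrict m ∘ xs) ![j m, j e, j r] := by
    rw [Sum.comp_elim]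
    congr 1
    funext i
    fin_cases i <;> rfl
  have hbound : j ∘ (m.ofMem ∘ default) = (j m).ofMem ∘ (default : Fin 0 → (j m).1.toSet) :=
    Subsingleton.elim _ _
  rw [Formula.Realize, Formula.Realize, ← VSet.realize_relativize (A := A) m e r,
    ← VSet.realize_relativize (A := A) (j m) (j e) (j r), ← hparams, ← hbound,
    j.map_boundedFormula]

end VEmbedding

namespace VEmbedding

variable {B : Set ZFSet.{u}} {η ζ : Ordinal.{u}} (j : VEmbedding B η ζ)

/-- `j S` is the required partner of `S`: its domain `j δ` contains `x`, which is larger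
than `δ`. -/
theorem exists_elemEmbeddableDiffCard (hB : ∀ x ∈ B, IsOrdinalLStdCode x)
    {δ E R κ x : ZFSet.{u}} (hS : δ.pair (E.pair R) ∈ B) (hSη : (δ.pair (E.pair R)).rank < η)
    (hκ : κ ∈ δ) (hx : ∀ hκη : κ.rank < η, x ∈ (j ⟨κ, hκη⟩).1) (hcard : δ.card < x.card) :
    ∃ N ∈ B, ElemEmbeddableDiffCard (δ.pair (E.pair R)) N := by
  let m : VSet η := ⟨δ, (ZFSet.rank_lt_rank_pair_left_s7 _ _).trans hSη⟩
  let w : VSet η := ⟨E.pair R, (ZFSet.rank_lt_rank_pair_right _ _).trans hSη⟩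
  let e : VSet η := ⟨E, (ZFSet.rank_lt_rank_pair_left_s7 _ _).trans w.2⟩
  let r : VSet η := ⟨R, (ZFSet.rank_lt_rank_pair_right _ _).trans w.2⟩
  let k : VSet η := ⟨κ, m.rank_lt_of_mem hκ⟩
  have hjS : (j ⟨_, hSη⟩).1 = (j m).1.pair ((j e).1.pair (j r).1) := by
    rw [j.map_pair (x := m) (y := w) rfl, j.map_pair (x := e) (y := r) (z := w) rfl]
  have hjSB : (j ⟨_, hSη⟩).1 ∈ B := (j.mem_class_iff _).2 hS
  have hjm : (j m).1.IsOrdinal := by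
    obtain ⟨N, _, _, hN, hNord, -⟩ := hB _ hjSB
    rwa [(ZFSet.pair_inj.1 (hjS.symm.trans hN)).1]
  have hxjm : x ⊆ (j m).1 :=
    hjm.subset_of_mem (hjm.mem_trans (hx k.2) ((j.mem_iff k m).2 hκ))
  refine ⟨_, hjSB, δ, E, R, _, _, _, rfl, hjS, ?_,
    j.exists_elementaryEmbedding_codedStructure m e r⟩
  show Cardinal.mk δ ≠ Cardinal.mk (j m).1
  rw [ZFSet.cardinalMk_coe_sort, ZFSet.cardinalMk_coe_sort, Ne, Cardinal.lift_inj]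
  exact (hcard.trans_le (ZFSet.card_mono hxjm)).ne

end VEmbedding

/-- If for every proper class `A` there is an `A`-extendible cardinal, then for every proper
class `B` of ordinal `L_std`-structures there exist `M, N ∈ B` whose domains have different
cardinalities and an `L_std`-elementary embedding `j : M → N`. -/
theorem ordinalClassVP_of_aExtendible
    (h : ∀ A : Set ZFSet.{u}, IsProperClass A → ∃ α : ZFSet.{u}, AExtendible A α) :
    ∀ B : Set ZFSet.{u}, IsProperClass B → (∀ x ∈ B, IsOrdinalLStdCode x) →
      ∃ M ∈ B, ∃ N ∈ B, ElemEmbeddableDiffCard M N := by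
  intro B hB hcode
  obtain ⟨κ, ⟨hκ, -⟩, hext⟩ := h B hB
  obtain ⟨δ, E, R, hSB, hδ, hκδ⟩ := hB.exists_code_dom_gt hcode hκ
  obtain ⟨η, hη, hSη, hcard⟩ := ZFSet.exists_isOrdinal_lt_rank_card_lt (δ.pair (E.pair R)).rank
  have hδη : δ.rank < η.rank := (ZFSet.rank_lt_rank_pair_left_s7 _ _).trans hSη
  have hκη : κ ∈ η :=
    (ZFSet.IsOrdinal.rank_lt_iff_mem hκ hη).1 ((ZFSet.rank_lt_of_mem hκδ).trans hδη)
  obtain ⟨ζ, -, j, -, hcrit⟩ := hext η hη hκη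
  refine ⟨_, hSB, VEmbedding.exists_elemEmbeddableDiffCard j hcode hSB hSη hκδ
    (fun h => (hcrit h).2) ?_⟩
  rw [hδ.card_eq]
  exact (Ordinal.card_le_card (ZFSet.rank_lt_rank_pair_left_s7 _ _).le).trans_lt hcard
end

section
/- Suppose that for every proper class B of ordinal L_std-structures there exist M, N ∈ B whose domains have different cardinalities and an L_std-elementary embedding j : M → N. Then Vopěnka's Principle holds: for every proper class C of L_std-structures there are distinct M, N ∈ C and an L_std-elementary embedding j : M → N. (The proof goes via the class of all ordinal L_std-structures isomorphic to some member of C, and uses only the ordinary Axiom of Choice, not global choice.) -/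
open FirstOrder

universe u

/-- Vopěnka's Principle: for every proper class `C` of `L_std`-structures there are distinct
`M ≠ N` in `C` such that there is an `L_std`-elementary embedding from `M` into `N`. -/
def VopenkaPrinciple : Prop :=
  ∀ C : Set ZFSet.{u}, IsProperClass C → (∀ x ∈ C, IsLStdCode x) →
    ∃ M ∈ C, ∃ N ∈ C, M ≠ N ∧ ElemEmbeddable M N

/-! Every coded structure is isomorphic to one whose domain is the von Neumann ordinal of its
cardinality; fix such an ordinal copy of each member of `C`. If two distinct members have the
same copy, they are isomorphic and an isomorphism is the embedding. Otherwise the copies form a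
proper class, since replacement along an inverse of the copying map would make `C` a set. The
hypothesis then embeds one copy elementarily into a copy of different cardinality, so the two
originals are distinct, and conjugating by the isomorphisms gives the embedding between them. -/

def CodesIsomorphic (S T : ZFSet.{u}) : Prop :=
  ∃ M E R N E' R' : ZFSet.{u}, S = M.pair (E.pair R) ∧ T = N.pair (E'.pair R') ∧
    letI := codedStructure M E R
    letI := codedStructure N E' R'
    Nonempty (↥M.toSet ≃[LStd] ↥N.toSet)

theorem ZFSet.exists_isOrdinal_nonempty_equiv (x : ZFSet.{u}) :
    ∃ o : ZFSet.{u}, o.IsOrdinal ∧ Nonempty (↥o.toSet ≃ ↥x.toSet) := by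
  refine ⟨x.card.ord.toZFSet, ZFSet.isOrdinal_toZFSet _, Cardinal.eq.1 ?_⟩
  change Cardinal.mk ↥x.card.ord.toZFSet = Cardinal.mk ↥x
  rw [ZFSet.cardinalMk_coe_sort, ZFSet.cardinalMk_coe_sort, Ordinal.card_toZFSet,
    Cardinal.card_ord]

theorem exists_codesIsomorphic_of_equiv {O M : ZFSet.{u}} (f : ↥O.toSet ≃ ↥M.toSet)
    (E R : ZFSet.{u}) :
    ∃ E' R' : ZFSet.{u}, (∀ p ∈ E', ∃ a ∈ O, ∃ b ∈ O, p = a.pair b) ∧ R' ⊆ O ∧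
      CodesIsomorphic (O.pair (E'.pair R')) (M.pair (E.pair R)) := by
  classical
  -- `g` extends `f` to all sets (junk outside `O`), so the relations pulled back along `f` can
  -- be cut out of `O` by separation.
  let g : ZFSet.{u} → ZFSet.{u} := fun a => if h : a ∈ O then (f ⟨a, h⟩).1 else ∅
  have hg : ∀ a : ↥O.toSet, g a.1 = (f a).1 := fun a => dif_pos a.2
  let E' := ZFSet.pairSep (fun a b => (g a).pair (g b) ∈ E) O O
  let R' := ZFSet.sep (fun a => g a ∈ R) O
  refine ⟨E', R', ?_, fun a ha => (ZFSet.mem_sep.1 ha).1, O, E', R', M, E, R, rfl, rfl, ?_⟩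
  · intro p hp
    obtain ⟨a, ha, b, hb, rfl, -⟩ := ZFSet.mem_pairSep.1 hp
    exact ⟨a, ha, b, hb, rfl⟩
  let := codedStructure M E R
  let := codedStructure O E' R'
  refine ⟨⟨f, fun {_} φ _ => φ.elim, fun {_} ρ x => ?_⟩⟩
  cases ρ with
  | eps =>
    change (f (x 0)).1.pair (f (x 1)).1 ∈ E ↔ (x 0).1.pair (x 1).1 ∈ E'
    simp only [E', ZFSet.mem_pairSep, ZFSet.pair_inj, ← hg]
    exact ⟨fun hE => ⟨_, (x 0).2, _, (x 1).2, ⟨rfl, rfl⟩, hE⟩,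
      fun ⟨_, _, _, _, ⟨ha, hb⟩, hE⟩ => ha ▸ hb ▸ hE⟩
  | r =>
    change (f (x 0)).1 ∈ R ↔ (x 0).1 ∈ R'
    rw [ZFSet.mem_sep, ← hg]
    exact (and_iff_right (x 0).2).symm

theorem IsLStdCode.exists_ordinal_codesIsomorphic {S : ZFSet.{u}} (hS : IsLStdCode S) :
    ∃ T, IsOrdinalLStdCode T ∧ CodesIsomorphic T S := by
  obtain ⟨M, E, R, rfl, -, -⟩ := hS
  obtain ⟨O, hO, ⟨f⟩⟩ := M.exists_isOrdinal_nonempty_equiv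
  obtain ⟨E', R', hE', hR', hiso⟩ := exists_codesIsomorphic_of_equiv f E R
  exact ⟨_, ⟨O, E', R', rfl, hO, hE', hR'⟩, hiso⟩

noncomputable def ordinalCopy (S : ZFSet.{u}) : ZFSet.{u} :=
  Classical.epsilon fun T => IsOrdinalLStdCode T ∧ CodesIsomorphic T S

theorem IsLStdCode.ordinalCopy_spec {S : ZFSet.{u}} (hS : IsLStdCode S) :
    IsOrdinalLStdCode (ordinalCopy S) ∧ CodesIsomorphic (ordinalCopy S) S :=
  Classical.epsilon_spec hS.exists_ordinal_codesIsomorphic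

theorem ElemEmbeddable.of_codesIsomorphic {S T U V : ZFSet.{u}} (hU : CodesIsomorphic U S)
    (hV : CodesIsomorphic V T) (h : ElemEmbeddable U V) : ElemEmbeddable S T := by
  obtain ⟨O, EO, RO, M, E, R, rfl, rfl, ⟨e₁⟩⟩ := hU
  obtain ⟨P, EP, RP, N, EN, RN, rfl, rfl, ⟨e₂⟩⟩ := hV
  obtain ⟨O', EO', RO', P', EP', RP', hU, hV, ⟨j⟩⟩ := h
  simp only [ZFSet.pair_inj] at hU hV
  obtain ⟨rfl, rfl, rfl⟩ := hU
  obtain ⟨rfl, rfl, rfl⟩ := hV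
  let := codedStructure M E R
  let := codedStructure N EN RN
  let := codedStructure O EO RO
  let := codedStructure P EP RP
  exact ⟨M, E, R, N, EN, RN, rfl, rfl,
    ⟨(e₂.toElementaryEmbedding.comp j).comp e₁.symm.toElementaryEmbedding⟩⟩

theorem CodesIsomorphic.elemEmbeddable_of_codesIsomorphic {S T U : ZFSet.{u}}
    (hS : CodesIsomorphic U S) (hT : CodesIsomorphic U T) : ElemEmbeddable S T := by
  obtain ⟨M, E, R, -, -, -, hU, -⟩ := id hS
  exact ElemEmbeddable.of_codesIsomorphic hS hT
    ⟨M, E, R, M, E, R, hU, hU, letI := codedStructure M E R; ⟨.refl LStd _⟩⟩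

theorem ElemEmbeddableDiffCard.elemEmbeddable {S T : ZFSet.{u}}
    (h : ElemEmbeddableDiffCard S T) : ElemEmbeddable S T :=
  let ⟨M, E, R, N, E', R', hS, hT, _, hj⟩ := h
  ⟨M, E, R, N, E', R', hS, hT, hj⟩

theorem ElemEmbeddableDiffCard.ne {S T : ZFSet.{u}} (h : ElemEmbeddableDiffCard S T) :
    S ≠ T := by
  rintro rfl
  obtain ⟨M, E, R, N, E', R', hM, hN, hcard, -⟩ := h
  obtain ⟨rfl, -⟩ := ZFSet.pair_injective (hM.symm.trans hN)
  exact hcard rfl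

/-- Replacement along a left inverse of `f` on `A` recovers `A` from `f '' A`. -/
theorem IsProperClass.image_of_injOn {A : Set ZFSet.{u}} {f : ZFSet.{u} → ZFSet.{u}}
    (hA : IsProperClass A) (hf : Set.InjOn f A) : IsProperClass (f '' A) := by
  rintro ⟨b, hb⟩
  have : ZFSet.Definable₁ (Function.invFunOn f A) := Classical.allZFSetDefinable _
  refine hA ⟨ZFSet.image (Function.invFunOn f A) b, ?_⟩
  change ((ZFSet.image (Function.invFunOn f A) b : ZFSet) : Set ZFSet) = A
  rw [ZFSet.coe_image]
  change Function.invFunOn f A '' b.toSet = A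
  rw [hb, hf.leftInvOn_invFunOn.image_image]

/-- If for every proper class `B` of ordinal `L_std`-structures there are `M, N ∈ B` whose
domains have different cardinalities with an `L_std`-elementary embedding `j : M → N`, then
Vopěnka's Principle holds. -/
theorem vopenkaPrinciple_of_ordinalClassVP
    (h : ∀ B : Set ZFSet.{u}, IsProperClass B → (∀ x ∈ B, IsOrdinalLStdCode x) →
      ∃ M ∈ B, ∃ N ∈ B, ElemEmbeddableDiffCard M N) :
    VopenkaPrinciple.{u} := by
  intro C hC hcode
  by_cases hinj : Set.InjOn ordinalCopy C
  · obtain ⟨_, ⟨S, hS, rfl⟩, _, ⟨T, hT, rfl⟩, hST⟩ := h _ (hC.image_of_injOn hinj)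
      (Set.forall_mem_image.2 fun S hS => (hcode S hS).ordinalCopy_spec.1)
    refine ⟨S, hS, T, hT, fun hST' => hST.ne (congrArg ordinalCopy hST'), ?_⟩
    exact hST.elemEmbeddable.of_codesIsomorphic (hcode S hS).ordinalCopy_spec.2
      (hcode T hT).ordinalCopy_spec.2
  · obtain ⟨S, hS, T, hT, hcopy, hne⟩ :
        ∃ S ∈ C, ∃ T ∈ C, ordinalCopy S = ordinalCopy T ∧ S ≠ T := by
      simpa [Set.InjOn] using hinj
    refine ⟨S, hS, T, hT, hne, ?_⟩
    exact CodesIsomorphic.elemEmbeddable_of_codesIsomorphic (hcode S hS).ordinalCopy_spec.2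
      (hcopy ▸ (hcode T hT).ordinalCopy_spec.2)
end
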